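/- arXiv:2001.09660 — 2 statements merged into one kernel-verified Lean document; each statement's English description precedes it below -/
import Mathlib

section
/- Let f, g : (0,∞) → ℝ be strictly increasing differentiable functions with f′ > 0 and g′ > 0 on (0,∞) such that f ∘ g⁻¹ is strictly convex on the range of g. Then for all p, q > 0, one has (f(q) − f(p))/f′(p) ≥ (g(q) − g(p))/g′(p), with equality if and only if p = q. -/
open Set Filter Topology

/-!
Put `φ = f ∘ g⁻¹`. The ratio `(f x - f p) / (g x - g p)` is the slope of the secant of `φ`
between `g p` and `g x`, so by strict convexity of `φ` and monotonicity of `g` it is strictly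
increasing in `x ≠ p`, while as `x → p` it tends to `f' p / g' p`. Hence it exceeds `f' p / g' p`
to the right of `p` and falls below it to the left; in both cases
`f' p / g' p * (g q - g p) < f q - f p` for `q ≠ p`.
-/

section OrderLimits

variable {α β : Type*} [LinearOrder α] [TopologicalSpace α] [OrderTopology α] [DenselyOrdered α]
  [LinearOrder β] [TopologicalSpace β] [OrderClosedTopology β] {F : α → β} {s : Set α} {a b : α}
  {L : β}

theorem StrictMonoOn.lt_apply_of_tendsto_nhdsGT (hF : StrictMonoOn F s) (hs : Ioc a b ⊆ s)
    (hab : a < b) (hlim : Tendsto F (𝓝[>] a) (𝓝 L)) : L < F b := by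
  obtain ⟨m, ham, hmb⟩ := exists_between hab
  have hm : m ∈ s := hs ⟨ham, hmb.le⟩
  have : (𝓝[>] a).NeBot := nhdsGT_neBot_of_exists_gt ⟨b, hab⟩
  have hle : ∀ᶠ x in 𝓝[>] a, F x ≤ F m := by
    filter_upwards [Ioo_mem_nhdsGT ham] with x hx
    exact (hF (hs ⟨hx.1, hx.2.le.trans hmb.le⟩) hm hx.2).le
  exact (le_of_tendsto hlim hle).trans_lt (hF hm (hs ⟨hab, le_rfl⟩) hmb)

theorem StrictMonoOn.apply_lt_of_tendsto_nhdsLT (hF : StrictMonoOn F s) (hs : Ico b a ⊆ s)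
    (hba : b < a) (hlim : Tendsto F (𝓝[<] a) (𝓝 L)) : F b < L := by
  obtain ⟨m, hbm, hma⟩ := exists_between hba
  have hm : m ∈ s := hs ⟨hbm.le, hma⟩
  have : (𝓝[<] a).NeBot := nhdsLT_neBot_of_exists_lt ⟨b, hba⟩
  have hge : ∀ᶠ x in 𝓝[<] a, F m ≤ F x := by
    filter_upwards [Ioo_mem_nhdsLT hma] with x hx
    exact (hF hm (hs ⟨hbm.le.trans hx.1.le, hx.2⟩) hx.1).le
  exact (hF (hs ⟨le_rfl, hba⟩) hm hbm).trans_le (ge_of_tendsto hlim hge)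

end OrderLimits

theorem HasDerivAt.tendsto_sub_div_sub {𝕜 : Type*} [NontriviallyNormedField 𝕜] {f g : 𝕜 → 𝕜}
    {f' g' a : 𝕜} (hf : HasDerivAt f f' a) (hg : HasDerivAt g g' a) (hg' : g' ≠ 0) :
    Tendsto (fun x => (f x - f a) / (g x - g a)) (𝓝[≠] a) (𝓝 (f' / g')) := by
  refine ((hasDerivAt_iff_tendsto_slope.mp hf).div (hasDerivAt_iff_tendsto_slope.mp hg) hg').congr'
    (eventually_nhdsWithin_of_forall fun x hx => ?_)
  simp only [Pi.div_apply, slope_def_field]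
  rw [div_div_div_cancel_right₀ (sub_ne_zero.mpr hx)]

section Secant

variable {𝕜 α : Type*} [Field 𝕜] [LinearOrder 𝕜] [IsStrictOrderedRing 𝕜] [LinearOrder α]
  {f g : α → 𝕜} {T : Set α} {a b : α}

theorem StrictConvexOn.strictMonoOn_secant_comp {φ : 𝕜 → 𝕜} {S : Set 𝕜}
    (hφ : StrictConvexOn 𝕜 S φ) (hg : StrictMonoOn g T) (hgT : MapsTo g T S)
    (hfg : ∀ x ∈ T, φ (g x) = f x) (ha : a ∈ T) :
    StrictMonoOn (fun x => (f x - f a) / (g x - g a)) (T \ {a}) := by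
  intro x ⟨hxT, hxa⟩ y ⟨hyT, hya⟩ hxy
  have hne : ∀ {z}, z ∈ T → z ∉ ({a} : Set α) → g z ≠ g a := fun hz hza =>
    hg.injOn.ne hz ha hza
  simpa only [hfg x hxT, hfg y hyT, hfg a ha] using
    hφ.secant_strict_mono (hgT ha) (hgT hxT) (hgT hyT) (hne hxT hxa) (hne hyT hya) (hg hxT hyT hxy)

theorem mul_sub_lt_sub_of_strictMonoOn_secant [TopologicalSpace α] [OrderTopology α]
    [DenselyOrdered α] [TopologicalSpace 𝕜] [OrderClosedTopology 𝕜] {L : 𝕜}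
    (hT : T.OrdConnected) (hg : StrictMonoOn g T)
    (hF : StrictMonoOn (fun x => (f x - f a) / (g x - g a)) (T \ {a}))
    (hlim : Tendsto (fun x => (f x - f a) / (g x - g a)) (𝓝[≠] a) (𝓝 L))
    (ha : a ∈ T) (hb : b ∈ T) (hba : b ≠ a) :
    L * (g b - g a) < f b - f a := by
  rcases hba.lt_or_gt with hba | hab
  · have hgba : g b - g a < 0 := sub_neg.mpr (hg hb ha hba)
    have hs : Ico b a ⊆ T \ {a} := fun x hx =>
      ⟨hT.out hb ha (Ico_subset_Icc_self hx), hx.2.ne⟩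
    have := hF.apply_lt_of_tendsto_nhdsLT hs hba (hlim.mono_left (nhdsLT_le_nhdsNE a))
    simpa only [div_lt_iff_of_neg hgba] using this
  · have hgab : 0 < g b - g a := sub_pos.mpr (hg ha hb hab)
    have hs : Ioc a b ⊆ T \ {a} := fun x hx =>
      ⟨hT.out ha hb (Ioc_subset_Icc_self hx), hx.1.ne'⟩
    have := hF.lt_apply_of_tendsto_nhdsGT hs hab (hlim.mono_left (nhdsGT_le_nhdsNE a))
    simpa only [lt_div_iff₀ hgab] using this

end Secant

theorem Ef_ge_Eg_general (f g f' g' ginv : ℝ → ℝ)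
    (hg_mono : StrictMonoOn g (Ioi 0))
    (hf' : ∀ x ∈ Ioi (0 : ℝ), HasDerivAt f (f' x) x)
    (hg' : ∀ x ∈ Ioi (0 : ℝ), HasDerivAt g (g' x) x)
    (hf'pos : ∀ x ∈ Ioi (0 : ℝ), 0 < f' x)
    (hg'pos : ∀ x ∈ Ioi (0 : ℝ), 0 < g' x)
    (hginv : ∀ x ∈ Ioi (0 : ℝ), ginv (g x) = x)
    (hconv : StrictConvexOn ℝ (g '' Ioi 0) (f ∘ ginv))
    (p q : ℝ) (hp : 0 < p) (hq : 0 < q) :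
    (g q - g p) / g' p ≤ (f q - f p) / f' p ∧
      ((f q - f p) / f' p = (g q - g p) / g' p ↔ p = q) := by
  rcases eq_or_ne q p with rfl | hqp
  · simp
  have hfp := hf'pos p hp
  have hgp := hg'pos p hp
  have hfg : ∀ x ∈ Ioi (0 : ℝ), (f ∘ ginv) (g x) = f x := fun x hx => by
    rw [Function.comp_apply, hginv x hx]
  have htangent : f' p / g' p * (g q - g p) < f q - f p :=
    mul_sub_lt_sub_of_strictMonoOn_secant ordConnected_Ioi hg_mono
      (hconv.strictMonoOn_secant_comp hg_mono (mapsTo_image g _) hfg hp)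
      ((hf' p hp).tendsto_sub_div_sub (hg' p hp) hgp.ne') hp hq hqp
  have hlt : (g q - g p) / g' p < (f q - f p) / f' p := by
    rw [div_lt_div_iff₀ hgp hfp]
    calc (g q - g p) * f' p = f' p / g' p * (g q - g p) * g' p := by field_simp
      _ < (f q - f p) * g' p := mul_lt_mul_of_pos_right htangent hgp
  exact ⟨hlt.le, iff_of_false hlt.ne' hqp.symm⟩

/-- If f, g are strictly increasing differentiable on (0,∞) with
f′ > 0, g′ > 0 and f ∘ g⁻¹ strictly convex on the range of g, then for p, q > 0,
E_f(p,q) = (f(q) − f(p))/f′(p) ≥ (g(q) − g(p))/g′(p) = E_g(p,q),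
with equality iff p = q. -/
theorem Ef_ge_Eg (f g f' g' ginv : ℝ → ℝ)
    (hf_mono : StrictMonoOn f (Ioi 0)) (hg_mono : StrictMonoOn g (Ioi 0))
    (hf' : ∀ x ∈ Ioi (0 : ℝ), HasDerivAt f (f' x) x)
    (hg' : ∀ x ∈ Ioi (0 : ℝ), HasDerivAt g (g' x) x)
    (hf'pos : ∀ x ∈ Ioi (0 : ℝ), 0 < f' x)
    (hg'pos : ∀ x ∈ Ioi (0 : ℝ), 0 < g' x)
    (hginv : ∀ x ∈ Ioi (0 : ℝ), ginv (g x) = x)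
    (hconv : StrictConvexOn ℝ (g '' Ioi 0) (f ∘ ginv))
    (p q : ℝ) (hp : 0 < p) (hq : 0 < q) :
    (g q - g p) / g' p ≤ (f q - f p) / f' p ∧
      ((f q - f p) / f' p = (g q - g p) / g' p ↔ p = q) :=
  Ef_ge_Eg_general f g f' g' ginv hg_mono hf' hg' hf'pos hg'pos hginv hconv p q hp hq
end

section
/- Let f, g : (0,∞) → ℝ be continuously differentiable strictly increasing functions with f′ > 0 and g′ > 0 on (0,∞), and fix p, q > 0. Then the limit as α → 1 (with α ∈ (0,1)) of (1/(α(1−α)))·(M^f_{1−α}(p,q) − M^g_{1−α}(p,q)) exists and equals E_f(p,q) − E_g(p,q) = (f(q) − f(p))/f′(p) − (g(q) − g(p))/g′(p). -/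
/-! At α = 1 both means equal p, and by the inverse function rule
α ↦ f⁻¹(α f(p) + (1 - α) f(q)) has derivative (f(p) - f(q)) / f'(p) there. So the difference H
of the two means vanishes at 1, and H(α) / (α (1 - α)) = -(1 / α) · slope H 1 α tends to
-H'(1) = E_f(p, q) - E_g(p, q). -/

open Set Filter Topology

theorem StrictMonoOn.hasDerivAt_of_leftInvOn {f g : ℝ → ℝ} {f' a : ℝ} {s : Set ℝ}
    (hmono : StrictMonoOn f s) (hcont : ContinuousOn f s) (hs : s ∈ 𝓝 a)
    (hinv : LeftInvOn g f s) (hf : HasDerivAt f f' a) (hf' : f' ≠ 0) :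
    HasDerivAt g f'⁻¹ (f a) := by
  obtain ⟨ε, hε, hIs⟩ : ∃ ε > 0, Icc (a - ε) (a + ε) ⊆ s := by
    obtain ⟨ε, hε, hball⟩ := Metric.mem_nhds_iff.mp hs
    refine ⟨ε / 2, half_pos hε, fun x hx => hball ?_⟩
    rw [Real.ball_eq_Ioo]
    exact ⟨by linarith [hx.1], by linarith [hx.2]⟩
  have hlo : a - ε ∈ s := hIs ⟨le_rfl, by linarith⟩
  have hhi : a + ε ∈ s := hIs ⟨by linarith, le_rfl⟩
  have hmonoI := hmono.mono hIs
  have hsurj : Icc (f (a - ε)) (f (a + ε)) ⊆ f '' Icc (a - ε) (a + ε) :=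
    intermediate_value_Icc (by linarith) (hcont.mono hIs)
  have hJ : Icc (f (a - ε)) (f (a + ε)) ∈ 𝓝 (f a) :=
    Icc_mem_nhds (hmono hlo (mem_of_mem_nhds hs) (by linarith))
      (hmono (mem_of_mem_nhds hs) hhi (by linarith))
  have hgmono : MonotoneOn g (Icc (f (a - ε)) (f (a + ε))) := by
    intro y₁ hy₁ y₂ hy₂ hy
    obtain ⟨x₁, hx₁, rfl⟩ := hsurj hy₁
    obtain ⟨x₂, hx₂, rfl⟩ := hsurj hy₂
    rw [hinv (hIs hx₁), hinv (hIs hx₂)]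
    exact (hmonoI.le_iff_le hx₁ hx₂).mp hy
  have hgJ : Icc (a - ε) (a + ε) ⊆ g '' Icc (f (a - ε)) (f (a + ε)) := fun x hx =>
    ⟨f x, ⟨hmonoI.monotoneOn ⟨le_rfl, by linarith⟩ hx hx.1,
      hmonoI.monotoneOn hx ⟨by linarith, le_rfl⟩ hx.2⟩, hinv (hIs hx)⟩
  have hga : g (f a) = a := hinv (mem_of_mem_nhds hs)
  have hgcont : ContinuousAt g (f a) :=
    continuousAt_of_monotoneOn_of_image_mem_nhds hgmono hJ
      (mem_of_superset (by rw [hga]; exact Icc_mem_nhds (by linarith) (by linarith)) hgJ)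
  refine HasDerivAt.of_local_left_inverse hgcont (hga ▸ hf) hf' ?_
  filter_upwards [hJ] with y hy
  obtain ⟨x, hx, rfl⟩ := hsurj hy
  rw [hinv (hIs hx)]

theorem HasDerivAt.comp_mul_add_one_sub_mul {φ : ℝ → ℝ} {d a b : ℝ} (h : HasDerivAt φ d a) :
    HasDerivAt (fun α => φ (α * a + (1 - α) * b)) (d * (a - b)) 1 := by
  have hline : HasDerivAt (fun α : ℝ => α * a + (1 - α) * b) (a - b) 1 :=
    (((hasDerivAt_id' 1).mul_const a).add
      (((hasDerivAt_id' 1).const_sub 1).mul_const b)).congr_deriv (by ring)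
  exact (by simpa using h : HasDerivAt φ d (1 * a + (1 - 1) * b)).comp 1 hline

theorem tendsto_one_div_mul_one_sub_mul_of_hasDerivAt {H : ℝ → ℝ} {d : ℝ}
    (hH : HasDerivAt H d 1) (h1 : H 1 = 0) :
    Tendsto (fun α => 1 / (α * (1 - α)) * H α) (𝓝[≠] 1) (𝓝 (-d)) := by
  have hinv : Tendsto (fun α : ℝ => -(1 / α)) (𝓝[≠] 1) (𝓝 (-(1 / 1))) :=
    (continuousAt_const.div continuousAt_id one_ne_zero).neg.tendsto.mono_left
      nhdsWithin_le_nhds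
  have := hinv.mul (hasDerivAt_iff_tendsto_slope.mp hH)
  rw [div_one, neg_one_mul] at this
  refine this.congr' (eventually_nhdsWithin_of_forall fun α hα => ?_)
  have hα₁ : α - 1 ≠ 0 := sub_ne_zero.mpr hα
  have hα₂ : 1 - α ≠ 0 := sub_ne_zero.mpr (Ne.symm hα)
  rw [slope_def_field, h1, sub_zero]
  field_simp
  ring

theorem qam_alpha_div_tendsto_one_general (f g f' g' finv ginv : ℝ → ℝ)
    (hf_mono : StrictMonoOn f (Ioi 0)) (hg_mono : StrictMonoOn g (Ioi 0))
    (hf' : ∀ x ∈ Ioi (0 : ℝ), HasDerivAt f (f' x) x)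
    (hg' : ∀ x ∈ Ioi (0 : ℝ), HasDerivAt g (g' x) x)
    (hf'pos : ∀ x ∈ Ioi (0 : ℝ), 0 < f' x)
    (hg'pos : ∀ x ∈ Ioi (0 : ℝ), 0 < g' x)
    (hfinv : ∀ x ∈ Ioi (0 : ℝ), finv (f x) = x)
    (hginv : ∀ x ∈ Ioi (0 : ℝ), ginv (g x) = x)
    (p q : ℝ) (hp : 0 < p) :
    Filter.Tendsto
      (fun α : ℝ => (1 / (α * (1 - α))) *
        (finv (α * f p + (1 - α) * f q) - ginv (α * g p + (1 - α) * g q)))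
      (nhdsWithin 1 (Ioo (0 : ℝ) 1))
      (nhds ((f q - f p) / f' p - (g q - g p) / g' p)) := by
  have hfinv' := hf_mono.hasDerivAt_of_leftInvOn
    (fun x hx => (hf' x hx).continuousAt.continuousWithinAt) (Ioi_mem_nhds hp) hfinv
    (hf' p hp) (hf'pos p hp).ne'
  have hginv' := hg_mono.hasDerivAt_of_leftInvOn
    (fun x hx => (hg' x hx).continuousAt.continuousWithinAt) (Ioi_mem_nhds hp) hginv
    (hg' p hp) (hg'pos p hp).ne'
  have hlim := tendsto_one_div_mul_one_sub_mul_of_hasDerivAt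
    ((hfinv'.comp_mul_add_one_sub_mul (b := f q)).sub
      (hginv'.comp_mul_add_one_sub_mul (b := g q)))
    (by simp [hfinv p hp, hginv p hp])
  rw [show (f q - f p) / f' p - (g q - g p) / g' p
      = -((f' p)⁻¹ * (f p - f q) - (g' p)⁻¹ * (g p - g q)) by ring]
  exact hlim.mono_left (nhdsWithin_mono 1 fun α (hα : α ∈ Ioo 0 1) => hα.2.ne)

/-- For f, g continuously differentiable strictly increasing on (0,∞)
with positive derivatives, and p, q > 0, the limit as α → 1 (α ∈ (0,1)) of
(1/(α(1−α)))·(M^f_{1−α}(p,q) − M^g_{1−α}(p,q)) exists and equals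
E_f(p,q) − E_g(p,q).  Here M^f_{1−α}(p,q) = f⁻¹(α f(p) + (1−α) f(q)). -/
theorem qam_alpha_div_tendsto_one (f g f' g' finv ginv : ℝ → ℝ)
    (hf_mono : StrictMonoOn f (Ioi 0)) (hg_mono : StrictMonoOn g (Ioi 0))
    (hf' : ∀ x ∈ Ioi (0 : ℝ), HasDerivAt f (f' x) x)
    (hg' : ∀ x ∈ Ioi (0 : ℝ), HasDerivAt g (g' x) x)
    (hf'cont : ContinuousOn f' (Ioi 0)) (hg'cont : ContinuousOn g' (Ioi 0))
    (hf'pos : ∀ x ∈ Ioi (0 : ℝ), 0 < f' x)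
    (hg'pos : ∀ x ∈ Ioi (0 : ℝ), 0 < g' x)
    (hfinv : ∀ x ∈ Ioi (0 : ℝ), finv (f x) = x)
    (hginv : ∀ x ∈ Ioi (0 : ℝ), ginv (g x) = x)
    (p q : ℝ) (hp : 0 < p) (hq : 0 < q) :
    Filter.Tendsto
      (fun α : ℝ => (1 / (α * (1 - α))) *
        (finv (α * f p + (1 - α) * f q) - ginv (α * g p + (1 - α) * g q)))
      (nhdsWithin 1 (Ioo (0 : ℝ) 1))
      (nhds ((f q - f p) / f' p - (g q - g p) / g' p)) :=
  qam_alpha_div_tendsto_one_general f g f' g' finv ginv hf_mono hg_mono hf' hg' hf'pos hg'pos hfinv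
    hginv p q hp
end
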